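/- arXiv:2511.11058 — 6 statements merged into one kernel-verified Lean document; each statement's English description precedes it below -/
import Mathlib

section
/- Let T be a densely defined symmetric operator in a Hilbert space H and let (u_α)_{α∈I} be an orthonormal basis of H with u_α ∈ D(T) for all α and ∑_{α∈I} ‖T u_α‖² < ∞. Then T is bounded on D(T), with ‖T u‖ ≤ ‖u‖·(∑_{α∈I} ‖T u_α‖²)^{1/2} for all u ∈ D(T); consequently T extends to a bounded operator on H of norm at most (∑_{α∈I} ‖T u_α‖²)^{1/2}. -/
/-!
Since `T` is symmetric, the `i`-th Fourier coefficient of `T u` is `⟪b i, T u⟫ = ⟪T (b i), u⟫`,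
which Cauchy–Schwarz bounds by `‖T (b i)‖ ‖u‖`. Summing the squares with Parseval's identity gives
`‖T u‖² ≤ (∑ ‖T (b i)‖²) ‖u‖²`, and a bounded operator on a dense domain extends by continuity
to all of `H` without increasing its norm.
-/

open scoped InnerProductSpace ComplexInnerProductSpace

section Parseval

variable {𝕜 E ι : Type*} [RCLike 𝕜] [NormedAddCommGroup E] [InnerProductSpace 𝕜 E]

theorem HilbertBasis.hasSum_norm_inner_sq (b : HilbertBasis ι 𝕜 E) (x : E) :
    HasSum (fun i => ‖⟪b i, x⟫_𝕜‖ ^ 2) (‖x‖ ^ 2) := by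
  simpa [b.repr_apply_apply, Real.rpow_two] using lp.hasSum_norm (p := 2) (by norm_num) (b.repr x)

end Parseval

namespace LinearPMap

variable {𝕜 E F ι : Type*} [RCLike 𝕜]

section FormalAdjoint

variable [NormedAddCommGroup E] [InnerProductSpace 𝕜 E] [NormedAddCommGroup F]
  [InnerProductSpace 𝕜 F] {T : E →ₗ.[𝕜] F} {S : F →ₗ.[𝕜] E}

theorem IsFormalAdjoint.norm_apply_sq_le (hST : S.IsFormalAdjoint T) (b : HilbertBasis ι 𝕜 F)
    (hb : ∀ i, b i ∈ S.domain) (hsum : Summable fun i => ‖S ⟨b i, hb i⟩‖ ^ 2) (u : T.domain) :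
    ‖T u‖ ^ 2 ≤ (∑' i, ‖S ⟨b i, hb i⟩‖ ^ 2) * ‖(u : E)‖ ^ 2 := by
  have hcoeff : ∀ i, ‖⟪b i, T u⟫_𝕜‖ ^ 2 ≤ ‖S ⟨b i, hb i⟩‖ ^ 2 * ‖(u : E)‖ ^ 2 := fun i => by
    rw [← hST ⟨b i, hb i⟩ u, ← mul_pow]
    exact pow_le_pow_left₀ (norm_nonneg _) (norm_inner_le_norm _ _) 2
  have hparseval := b.hasSum_norm_inner_sq (T u)
  rw [← hparseval.tsum_eq, ← tsum_mul_right]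
  exact hparseval.summable.tsum_le_tsum hcoeff (hsum.mul_right _)

theorem IsFormalAdjoint.norm_apply_le (hST : S.IsFormalAdjoint T) (b : HilbertBasis ι 𝕜 F)
    (hb : ∀ i, b i ∈ S.domain) (hsum : Summable fun i => ‖S ⟨b i, hb i⟩‖ ^ 2) (u : T.domain) :
    ‖T u‖ ≤ ‖(u : E)‖ * √(∑' i, ‖S ⟨b i, hb i⟩‖ ^ 2) := by
  rw [mul_comm, ← Real.sqrt_sq (norm_nonneg (u : E)),
    ← Real.sqrt_mul (tsum_nonneg fun _ => sq_nonneg _)]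
  exact Real.le_sqrt_of_sq_le (hST.norm_apply_sq_le b hb hsum u)

end FormalAdjoint

theorem exists_extension_of_dense_of_bounded [NormedAddCommGroup E] [NormedSpace 𝕜 E]
    [NormedAddCommGroup F] [NormedSpace 𝕜 F] [CompleteSpace F] (T : E →ₗ.[𝕜] F)
    (hdense : Dense (T.domain : Set E)) {C : ℝ} (hC : 0 ≤ C) (hbound : ∀ u, ‖T u‖ ≤ C * ‖(u : E)‖) :
    ∃ S : E →L[𝕜] F, (∀ u : T.domain, S u = T u) ∧ ‖S‖ ≤ C := by
  let f : T.domain →L[𝕜] F := T.toFun.mkContinuous C hbound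
  refine ⟨f.extend (Submodule.subtypeL T.domain), fun u => ?_, ?_⟩
  · exact f.extend_eq hdense.denseRange_val isUniformEmbedding_subtype_val.isUniformInducing u
  · calc ‖f.extend (Submodule.subtypeL T.domain)‖ ≤ (1 : NNReal) * ‖f‖ :=
          f.opNorm_extend_le (N := 1) hdense.denseRange_val fun u => by simp
      _ ≤ C := by simpa using T.toFun.mkContinuous_norm_le hC hbound

end LinearPMap

/-- **A symmetric operator that is Hilbert–Schmidt on an orthonormal basis is bounded.**
Let `T` be a densely defined symmetric operator in a Hilbert space `H` and `(u_α)` an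
orthonormal basis with `u_α ∈ D(T)` and `∑ ‖T u_α‖² < ∞`.  Then
`‖Tu‖ ≤ ‖u‖ (∑ ‖T u_α‖²)^{1/2}` on `D(T)`, and `T` extends to a bounded operator on `H` of
norm at most `(∑ ‖T u_α‖²)^{1/2}`. -/
theorem symmetric_operator_bounded_of_summable_on_basis
    {H ι : Type*} [NormedAddCommGroup H] [InnerProductSpace ℂ H] [CompleteSpace H]
    (T : H →ₗ.[ℂ] H) (hdense : Dense (T.domain : Set H))
    (hsymm : ∀ u v : T.domain, ⟪T u, (v : H)⟫ = ⟪(u : H), T v⟫)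
    (b : HilbertBasis ι ℂ H) (hb : ∀ i, b i ∈ T.domain)
    (hsum : Summable fun i => ‖T ⟨b i, hb i⟩‖ ^ 2) :
    (∀ u : T.domain, ‖T u‖ ≤ ‖(u : H)‖ * Real.sqrt (∑' i, ‖T ⟨b i, hb i⟩‖ ^ 2)) ∧
    ∃ S : H →L[ℂ] H, (∀ u : T.domain, S u = T u) ∧
      ‖S‖ ≤ Real.sqrt (∑' i, ‖T ⟨b i, hb i⟩‖ ^ 2) := by
  have hbound : ∀ u : T.domain, ‖T u‖ ≤ ‖(u : H)‖ * √(∑' i, ‖T ⟨b i, hb i⟩‖ ^ 2) :=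
    LinearPMap.IsFormalAdjoint.norm_apply_le hsymm b hb hsum
  exact ⟨hbound, T.exists_extension_of_dense_of_bounded hdense (Real.sqrt_nonneg _)
    fun u => (hbound u).trans_eq (mul_comm _ _)⟩
end

section
/- Let A and B be self-adjoint operators in a Hilbert space H, each having pure point spectrum (i.e. H has an orthonormal basis (u_α)_{α∈I} with A u_α = λ_α u_α for real numbers λ_α, and an orthonormal basis (v_α)_{α∈I} with B v_α = μ_α v_α for real numbers μ_α). Let C be a Hilbert–Schmidt operator on H with A = B + C, and let f : ℝ → ℝ be a bounded Lipschitz continuous function with Lipschitz constant L. Then f(A) − f(B) is a Hilbert–Schmidt operator and ‖f(A) − f(B)‖_HS ≤ L·‖C‖_HS. -/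
open Filter Topology
open scoped ComplexInnerProductSpace

lemma parseval_aux {H ι : Type*} [NormedAddCommGroup H] [InnerProductSpace ℂ H] [CompleteSpace H]
    (g : HilbertBasis ι ℂ H) (x : H) :
    HasSum (fun j => ‖⟪(g j : H), x⟫‖ ^ 2) (‖x‖ ^ 2) := by
  have h := g.hasSum_inner_mul_inner x x
  have h2 := Complex.reCLM.hasSum h
  convert h2 using 2 with j
  · simp only [Complex.reCLM_apply]
    rw [← inner_conj_symm x (g j : H), Complex.conj_mul']
    norm_cast
  · simp only [Complex.reCLM_apply]
    rw [← @inner_self_eq_norm_sq ℂ]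
    rfl

lemma diag_inner_aux {H ι : Type*} [NormedAddCommGroup H] [InnerProductSpace ℂ H]
    [CompleteSpace H] (g : HilbertBasis ι ℂ H) (c : ι → ℂ) (T : H →L[ℂ] H)
    (hT : ∀ j : ι, T (g j) = c j • (g j : H)) (x : H) (j : ι) :
    ⟪(g j : H), T x⟫ = c j * ⟪(g j : H), x⟫ := by
  classical
  have h1 := (g.hasSum_repr x).mapL T
  have h2 := h1.mapL (innerSL ℂ (g j : H))
  have h3 : (fun k => (innerSL ℂ (g j : H)) (T (g.repr x k • (g k : H)))) =
      fun k => if k = j then c j * g.repr x j else 0 := by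
    funext k
    simp only [map_smul, hT, innerSL_apply_apply, inner_smul_right]
    have := orthonormal_iff_ite.mp g.orthonormal j k
    rw [this]
    by_cases hk : k = j
    · subst hk; simp [mul_comm]
    · simp [hk, Ne.symm hk]
  rw [h3] at h2
  have h4 := hasSum_ite_eq j (c j * g.repr x j)
  rw [innerSL_apply_apply] at h2
  rw [← h4.unique h2, g.repr_apply_apply]

/-- **Birman–Solomyak theorem for operators with pure point spectrum.**
Let `A, B` be self-adjoint operators in a Hilbert space `H` with pure point spectrum: there
are orthonormal bases `(e_i)`, `(g_i)` of `H` and reals `(λ_i)`, `(μ_i)` with `A e_i = λ_i e_i`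
and `B g_i = μ_i g_i`.  Let `C` be a Hilbert–Schmidt operator with `A = B + C`, which, in
terms of matrix elements with respect to the eigenbases, reads
`⟪C e_i, g_j⟫ = (λ_i - μ_j) ⟪e_i, g_j⟫`.  Let `f : ℝ → ℝ` be a bounded Lipschitz function
with constant `L`, so that `f(A)`, `f(B)` are the bounded operators with `f(A) e_i = f(λ_i) e_i`,
`f(B) g_j = f(μ_j) g_j`.  Then `f(A) - f(B)` is Hilbert–Schmidt and
`‖f(A) - f(B)‖_HS ≤ L ‖C‖_HS`. -/
theorem birman_solomyak_pure_point_spectrum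
    {H ι : Type*} [NormedAddCommGroup H] [InnerProductSpace ℂ H] [CompleteSpace H]
    (e g : HilbertBasis ι ℂ H) (lam mu : ι → ℝ)
    (f : ℝ → ℝ) (L : NNReal) (hf : LipschitzWith L f)
    (Mf : ℝ) (hfb : ∀ x : ℝ, |f x| ≤ Mf)
    (C : H →L[ℂ] H)
    (hC : Summable fun i => ‖C (e i)‖ ^ 2)
    -- `A = B + C` in matrix elements with respect to the two eigenbases
    (hABC : ∀ i j : ι, ⟪C (e i), (g j : H)⟫ = ((lam i : ℂ) - (mu j : ℂ)) * ⟪(e i : H), (g j : H)⟫)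
    -- `f(A)` and `f(B)`, the bounded operators with `f(A) e_i = f(λ_i) e_i`, `f(B) g_j = f(μ_j) g_j`
    (FA FB : H →L[ℂ] H)
    (hFA : ∀ i : ι, FA (e i) = (f (lam i) : ℂ) • (e i : H))
    (hFB : ∀ j : ι, FB (g j) = (f (mu j) : ℂ) • (g j : H)) :
    Summable (fun i => ‖(FA - FB) (e i)‖ ^ 2) ∧
    ∑' i, ‖(FA - FB) (e i)‖ ^ 2 ≤ (L : ℝ) ^ 2 * ∑' i, ‖C (e i)‖ ^ 2 := by
  -- pointwise bound: ‖(FA - FB)(e i)‖² ≤ L² ‖C (e i)‖²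
  have key : ∀ i, ‖(FA - FB) (e i)‖ ^ 2 ≤ (L : ℝ) ^ 2 * ‖C (e i)‖ ^ 2 := by
    intro i
    have hP1 := parseval_aux g ((FA - FB) (e i))
    have hP2 := (parseval_aux g (C (e i))).mul_left ((L : ℝ) ^ 2)
    refine hasSum_le ?_ hP1 hP2
    intro j
    -- matrix element of FA - FB
    have hAB : ⟪(g j : H), (FA - FB) (e i)⟫
        = ((f (lam i) : ℂ) - (f (mu j) : ℂ)) * ⟪(g j : H), (e i : H)⟫ := by
      have hB := diag_inner_aux g (fun j => (f (mu j) : ℂ)) FB hFB (e i) j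
      simp only [ContinuousLinearMap.sub_apply, inner_sub_right, hFA i, inner_smul_right, hB,
        sub_mul]
    have hCel : ‖⟪(g j : H), C (e i)⟫‖ = |lam i - mu j| * ‖⟪(g j : H), (e i : H)⟫‖ := by
      rw [← norm_inner_symm, hABC i j, norm_mul, norm_inner_symm]
      congr 1
      rw [← Complex.ofReal_sub, Complex.norm_real, Real.norm_eq_abs]
    rw [hAB, norm_mul, mul_pow]
    rw [hCel, mul_pow, ← mul_assoc]
    refine mul_le_mul_of_nonneg_right ?_ (by positivity)
    have hlip := hf.dist_le_mul (lam i) (mu j)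
    rw [Real.dist_eq, Real.dist_eq] at hlip
    have h1 : ‖((f (lam i) : ℂ) - (f (mu j) : ℂ))‖ = |f (lam i) - f (mu j)| := by
      rw [← Complex.ofReal_sub, Complex.norm_real, Real.norm_eq_abs]
    rw [h1]
    calc |f (lam i) - f (mu j)| ^ 2 ≤ ((L : ℝ) * |lam i - mu j|) ^ 2 := by
          apply pow_le_pow_left₀ (abs_nonneg _) hlip
      _ = (L : ℝ) ^ 2 * |lam i - mu j| ^ 2 := by ring
  have hsum : Summable (fun i => ‖(FA - FB) (e i)‖ ^ 2) := by
    refine Summable.of_nonneg_of_le (fun i => by positivity) key (hC.mul_left _)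
  refine ⟨hsum, ?_⟩
  rw [← tsum_mul_left]
  exact Summable.tsum_le_tsum key hsum (hC.mul_left _)
end

section
/- Let 𝓗 be a real Hilbert space, m > 0, and A : 𝓗 → 𝓗* a strongly monotone map with monotonicity constant m. Let R > 0 and 𝓑 = {u ∈ 𝓗 : ‖u‖ ≤ R}, and suppose the restriction of A to 𝓑 is Lipschitz continuous with Lipschitz constant M. Let J : 𝓗 → 𝓗* be the duality map and fix f ∈ 𝓗*. Define Q : 𝓑 → 𝓗 by Qu = u − (m/M²)·J^{−1}(Au − f). Then Q is a contraction on 𝓑 with contraction constant √(1 − m²/M²): ‖Qu − Qv‖ ≤ √(1 − m²/M²)·‖u − v‖ for all u, v ∈ 𝓑. -/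
/-!
Put `w = u - v` and `a = J⁻¹(Au - Av)`, so that `Qu - Qv = w - c a` with `c = m/M²`.
Strong monotonicity gives `⟪a, w⟫ ≥ m‖w‖²` and the Lipschitz bound `‖a‖ ≤ M‖w‖`, hence
`‖w - c a‖² = ‖w‖² - 2c⟪a, w⟫ + c²‖a‖² ≤ (1 - 2cm + c²M²)‖w‖²`,
and the choice `c = m/M²` minimises the right-hand side, where it equals `(1 - m²/M²)‖w‖²`.
-/

open RealInnerProductSpace

section InnerProductSpace

variable {E : Type*} [NormedAddCommGroup E] [InnerProductSpace ℝ E]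

theorem norm_sub_smul_sq_le_of_inner_ge {w a : E} {c m M : ℝ} (hc : 0 ≤ c)
    (hinner : m * ‖w‖ ^ 2 ≤ ⟪a, w⟫) (hnorm : ‖a‖ ≤ M * ‖w‖) :
    ‖w - c • a‖ ^ 2 ≤ (1 - 2 * c * m + c ^ 2 * M ^ 2) * ‖w‖ ^ 2 := by
  have hnorm_sq : ‖a‖ ^ 2 ≤ (M * ‖w‖) ^ 2 := pow_le_pow_left₀ (norm_nonneg a) hnorm 2
  calc ‖w - c • a‖ ^ 2 = ‖w‖ ^ 2 - 2 * c * ⟪a, w⟫ + c ^ 2 * ‖a‖ ^ 2 := by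
        rw [norm_sub_sq_real, real_inner_smul_right, norm_smul, Real.norm_of_nonneg hc,
          real_inner_comm]
        ring
    _ ≤ ‖w‖ ^ 2 - 2 * c * (m * ‖w‖ ^ 2) + c ^ 2 * (M * ‖w‖) ^ 2 := by
        gcongr
    _ = (1 - 2 * c * m + c ^ 2 * M ^ 2) * ‖w‖ ^ 2 := by ring

theorem norm_sub_smul_le_sqrt_of_inner_ge {w a : E} {m M : ℝ} (hm : 0 < m) (hmM : m ≤ M)
    (hinner : m * ‖w‖ ^ 2 ≤ ⟪a, w⟫) (hnorm : ‖a‖ ≤ M * ‖w‖) :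
    ‖w - (m / M ^ 2) • a‖ ≤ √(1 - m ^ 2 / M ^ 2) * ‖w‖ := by
  have hM : M ≠ 0 := (hm.trans_le hmM).ne'
  have hsq := norm_sub_smul_sq_le_of_inner_ge (c := m / M ^ 2) (by positivity) hinner hnorm
  have hcoeff : 1 - 2 * (m / M ^ 2) * m + (m / M ^ 2) ^ 2 * M ^ 2 = 1 - m ^ 2 / M ^ 2 := by
    field_simp
    ring
  rw [hcoeff] at hsq
  calc ‖w - (m / M ^ 2) • a‖ = √(‖w - (m / M ^ 2) • a‖ ^ 2) :=
        (Real.sqrt_sq (norm_nonneg _)).symm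
    _ ≤ √((1 - m ^ 2 / M ^ 2) * ‖w‖ ^ 2) := Real.sqrt_le_sqrt hsq
    _ = √(1 - m ^ 2 / M ^ 2) * ‖w‖ := by
        rw [Real.sqrt_mul' _ (sq_nonneg _), Real.sqrt_sq (norm_nonneg _)]

end InnerProductSpace

theorem iteration_map_contraction_general
    {𝓗 : Type*} [NormedAddCommGroup 𝓗] [InnerProductSpace ℝ 𝓗] [CompleteSpace 𝓗]
    (m : ℝ) (hm : 0 < m) (A : 𝓗 → StrongDual ℝ 𝓗)
    (hmono : ∀ u v : 𝓗, m * ‖u - v‖ ^ 2 ≤ (A u - A v) (u - v))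
    (R : ℝ) (M : ℝ) (hmM : m ≤ M)
    (hlip : ∀ u v : 𝓗, ‖u‖ ≤ R → ‖v‖ ≤ R → ‖A u - A v‖ ≤ M * ‖u - v‖)
    (f : StrongDual ℝ 𝓗) :
    ∀ u v : 𝓗, ‖u‖ ≤ R → ‖v‖ ≤ R →
      ‖(u - (m / M ^ 2) • (InnerProductSpace.toDual ℝ 𝓗).symm (A u - f)) -
          (v - (m / M ^ 2) • (InnerProductSpace.toDual ℝ 𝓗).symm (A v - f))‖ ≤
        Real.sqrt (1 - m ^ 2 / M ^ 2) * ‖u - v‖ := by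
  intro u v hu hv
  set J := InnerProductSpace.toDual ℝ 𝓗
  have hdiff : (u - (m / M ^ 2) • J.symm (A u - f)) - (v - (m / M ^ 2) • J.symm (A v - f)) =
      (u - v) - (m / M ^ 2) • J.symm (A u - A v) := by
    rw [← sub_sub_sub_cancel_right (A u) (A v) f, map_sub J.symm (A u - f), smul_sub]
    abel
  rw [hdiff]
  refine norm_sub_smul_le_sqrt_of_inner_ge hm hmM ?_ ?_
  · rw [InnerProductSpace.toDual_symm_apply]
    exact hmono u v
  · rw [LinearIsometryEquiv.norm_map]
    exact hlip u v hu hv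

/-- **The iteration map is a contraction.**
Let `𝓗` be a real Hilbert space, `A : 𝓗 → 𝓗*` strongly monotone with constant `m > 0`,
Lipschitz with constant `M` on the closed ball `𝓑` of radius `R`, let `J` be the duality map and
`f ∈ 𝓗*`.  Then `Q u = u - (m/M²) J⁻¹(Au - f)` is a contraction on `𝓑` with contraction
constant `√(1 - m²/M²)`. -/
theorem iteration_map_contraction
    {𝓗 : Type*} [NormedAddCommGroup 𝓗] [InnerProductSpace ℝ 𝓗] [CompleteSpace 𝓗]
    (m : ℝ) (hm : 0 < m) (A : 𝓗 → StrongDual ℝ 𝓗)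
    (hmono : ∀ u v : 𝓗, m * ‖u - v‖ ^ 2 ≤ (A u - A v) (u - v))
    (R : ℝ) (hR : 0 < R) (M : ℝ) (hmM : m ≤ M)
    (hlip : ∀ u v : 𝓗, ‖u‖ ≤ R → ‖v‖ ≤ R → ‖A u - A v‖ ≤ M * ‖u - v‖)
    (f : StrongDual ℝ 𝓗) :
    ∀ u v : 𝓗, ‖u‖ ≤ R → ‖v‖ ≤ R →
      ‖(u - (m / M ^ 2) • (InnerProductSpace.toDual ℝ 𝓗).symm (A u - f)) -
          (v - (m / M ^ 2) • (InnerProductSpace.toDual ℝ 𝓗).symm (A v - f))‖ ≤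
        Real.sqrt (1 - m ^ 2 / M ^ 2) * ‖u - v‖ :=
  iteration_map_contraction_general m hm A hmono R M hmM hlip f
end

section
/- Let 𝓗 be a real Hilbert space, m > 0, and A : 𝓗 → 𝓗* a strongly monotone map with monotonicity constant m. Let R > 0 and 𝓑 = {u ∈ 𝓗 : ‖u‖ ≤ R}, and suppose the restriction of A to 𝓑 is Lipschitz continuous with Lipschitz constant M. Let J : 𝓗 → 𝓗* be the duality map, fix f ∈ 𝓗*, and define Q : 𝓑 → 𝓗 by Qu = u − (m/M²)·J^{−1}(Au − f). If R ≥ (2/m)·‖A0 − f‖_{𝓗*}, then Q maps 𝓑 into itself: ‖Qu‖ ≤ R for all u ∈ 𝓑. -/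
/-! With `J` the Riesz isomorphism, split `J⁻¹(Au - f) = J⁻¹(Au - A0) + J⁻¹(A0 - f)`.
For `y = J⁻¹(Au - A0)` strong monotonicity gives `m‖u‖² ≤ ⟪u, y⟫` and the Lipschitz bound gives
`‖y‖ ≤ M‖u‖`, so the step `u ↦ u - (m/M²) y` contracts: `‖u - (m/M²) y‖² ≤ (1 - m²/M²)‖u‖²`,
whence `‖u - (m/M²) y‖ ≤ (1 - m²/(2M²))R`. The remaining term has norm
`(m/M²)‖A0 - f‖ ≤ m²R/(2M²)`, which exactly fills the gap up to `R`. -/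

lemma div_sq_mul_le_one {m M : ℝ} (hm : 0 < m) (hmM : m ≤ M) : m / M ^ 2 * m ≤ 1 := by
  rw [div_mul_eq_mul_div, div_le_one (by nlinarith)]
  nlinarith

section Contraction

variable {E : Type*} [SeminormedAddCommGroup E] [InnerProductSpace ℝ E]

lemma norm_sub_smul_sq_le_of_inner_ge_s12 {x y : E} {m M t : ℝ} (ht : 0 ≤ t)
    (hinner : m * ‖x‖ ^ 2 ≤ inner ℝ x y) (hy : ‖y‖ ≤ M * ‖x‖) :
    ‖x - t • y‖ ^ 2 ≤ (1 - 2 * t * m + t ^ 2 * M ^ 2) * ‖x‖ ^ 2 := by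
  have hy_sq : ‖y‖ ^ 2 ≤ M ^ 2 * ‖x‖ ^ 2 := by
    rw [← mul_pow]; exact pow_le_pow_left₀ (norm_nonneg y) hy 2
  rw [norm_sub_sq_real, real_inner_smul_right, norm_smul_of_nonneg ht, mul_pow]
  nlinarith [mul_le_mul_of_nonneg_left hinner ht, mul_le_mul_of_nonneg_left hy_sq (sq_nonneg t)]

/-- The optimal step `t = m/M²` of the estimate above; `√(1 - s) ≤ 1 - s/2` removes the root. -/
lemma norm_sub_smul_le_of_inner_ge {x y : E} {m M : ℝ} (hm : 0 < m) (hmM : m ≤ M)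
    (hinner : m * ‖x‖ ^ 2 ≤ inner ℝ x y) (hy : ‖y‖ ≤ M * ‖x‖) :
    ‖x - (m / M ^ 2) • y‖ ≤ (1 - m / M ^ 2 * m / 2) * ‖x‖ := by
  have hM : 0 < M := hm.trans_le hmM
  set t := m / M ^ 2
  have hcoeff : 1 - 2 * t * m + t ^ 2 * M ^ 2 = 1 - t * m := by
    simp only [t]; field_simp; ring
  have hs : t * m ≤ 1 := div_sq_mul_le_one hm hmM
  have hsq := norm_sub_smul_sq_le_of_inner_ge_s12 (t := t) (by positivity) hinner hy
  rw [hcoeff] at hsq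
  rw [← sq_le_sq₀ (norm_nonneg _) (mul_nonneg (by linarith) (norm_nonneg x))]
  nlinarith [sq_nonneg (t * m * ‖x‖)]

end Contraction

theorem iteration_map_maps_ball_into_itself_general
    {𝓗 : Type*} [NormedAddCommGroup 𝓗] [InnerProductSpace ℝ 𝓗] [CompleteSpace 𝓗]
    (m : ℝ) (hm : 0 < m) (A : 𝓗 → StrongDual ℝ 𝓗)
    (hmono : ∀ u v : 𝓗, m * ‖u - v‖ ^ 2 ≤ (A u - A v) (u - v))
    (R : ℝ) (M : ℝ) (hmM : m ≤ M)
    (hlip : ∀ u v : 𝓗, ‖u‖ ≤ R → ‖v‖ ≤ R → ‖A u - A v‖ ≤ M * ‖u - v‖)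
    (f : StrongDual ℝ 𝓗)
    (hRf : 2 / m * ‖A 0 - f‖ ≤ R) :
    ∀ u : 𝓗, ‖u‖ ≤ R →
      ‖u - (m / M ^ 2) • (InnerProductSpace.toDual ℝ 𝓗).symm (A u - f)‖ ≤ R := by
  intro u hu
  set J := InnerProductSpace.toDual ℝ 𝓗
  set t := m / M ^ 2
  have hinner : m * ‖u‖ ^ 2 ≤ inner ℝ u (J.symm (A u - A 0)) := by
    rw [real_inner_comm, InnerProductSpace.toDual_symm_apply]
    simpa using hmono u 0
  have hlip0 : ‖J.symm (A u - A 0)‖ ≤ M * ‖u‖ := by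
    rw [J.symm.norm_map]
    simpa using hlip u 0 hu (by simpa using (norm_nonneg u).trans hu)
  have hcontr := norm_sub_smul_le_of_inner_ge hm hmM hinner hlip0
  have hf : ‖A 0 - f‖ ≤ m * R / 2 := by
    rw [div_mul_eq_mul_div, div_le_iff₀ hm] at hRf; linarith
  have ht : 0 ≤ t := by positivity
  have hsplit :
      u - t • J.symm (A u - f) = (u - t • J.symm (A u - A 0)) - t • J.symm (A 0 - f) := by
    rw [sub_sub, ← smul_add, ← map_add, sub_add_sub_cancel]
  calc ‖u - t • J.symm (A u - f)‖
      ≤ ‖u - t • J.symm (A u - A 0)‖ + t * ‖A 0 - f‖ := by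
        rw [hsplit, ← J.symm.norm_map (A 0 - f), ← norm_smul_of_nonneg ht]; exact norm_sub_le _ _
    _ ≤ (1 - t * m / 2) * R + t * (m * R / 2) := by
        have hs := div_sq_mul_le_one hm hmM
        exact add_le_add (hcontr.trans (mul_le_mul_of_nonneg_left hu (by linarith)))
          (mul_le_mul_of_nonneg_left hf ht)
    _ = R := by ring

/-- **The iteration map preserves the ball.**
Let `𝓗` be a real Hilbert space, `A : 𝓗 → 𝓗*` strongly monotone with constant `m > 0`,
Lipschitz with constant `M` on the closed ball `𝓑` of radius `R`, let `J` be the duality map,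
`f ∈ 𝓗*`, and `Q u = u - (m/M²) J⁻¹(Au - f)`.  If `R ≥ (2/m)·‖A0 - f‖` then `Q` maps `𝓑`
into itself. -/
theorem iteration_map_maps_ball_into_itself
    {𝓗 : Type*} [NormedAddCommGroup 𝓗] [InnerProductSpace ℝ 𝓗] [CompleteSpace 𝓗]
    (m : ℝ) (hm : 0 < m) (A : 𝓗 → StrongDual ℝ 𝓗)
    (hmono : ∀ u v : 𝓗, m * ‖u - v‖ ^ 2 ≤ (A u - A v) (u - v))
    (R : ℝ) (hR : 0 < R) (M : ℝ) (hmM : m ≤ M)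
    (hlip : ∀ u v : 𝓗, ‖u‖ ≤ R → ‖v‖ ≤ R → ‖A u - A v‖ ≤ M * ‖u - v‖)
    (f : StrongDual ℝ 𝓗)
    (hRf : 2 / m * ‖A 0 - f‖ ≤ R) :
    ∀ u : 𝓗, ‖u‖ ≤ R →
      ‖u - (m / M ^ 2) • (InnerProductSpace.toDual ℝ 𝓗).symm (A u - f)‖ ≤ R :=
  iteration_map_maps_ball_into_itself_general m hm A hmono R M hmM hlip f hRf
end

section
/- Let 𝓗 be a real Hilbert space, m > 0, and A : 𝓗 → 𝓗* a strongly monotone map with monotonicity constant m. Let R > 0 and 𝓑 = {u ∈ 𝓗 : ‖u‖ ≤ R}, and suppose the restriction of A to 𝓑 is Lipschitz continuous with Lipschitz constant M. Let J : 𝓗 → 𝓗* be the duality map, fix f ∈ 𝓗*, define Q : 𝓑 → 𝓗 by Qu = u − (m/M²)·J^{−1}(Au − f), and assume R ≥ (2/m)·‖A0 − f‖_{𝓗*}. Then there exists a unique u ∈ 𝓑 with Au = f; this u satisfies ‖u‖ ≤ (1/m)·‖A0 − f‖_{𝓗*}, and u = lim_{n→∞} u_n, where u₁ = 0 and u_{n+1}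 = Q u_n for all n ∈ ℕ. -/
/-!
With `c = m/M²`, expanding `‖(u - v) - c J⁻¹(Au - Av)‖²` and bounding the cross term by strong
monotonicity and the last term by the Lipschitz bound shows that `Q` is a contraction on `𝓑` with
constant `√(1 - m²/M²)`. Since `‖Q0‖ = c‖A0 - f‖ ≤ (m²/M²)·R/2` and `√(1 - t) ≤ 1 - t/2`, `Q` maps
`𝓑` into itself, so Banach's fixed point theorem gives the limit `u` of the iterates, and fixed
points of `Q` are exactly the solutions of `Au = f`. Strong monotonicity gives
`m‖u - v‖ ≤ ‖Au - Av‖`, which yields both uniqueness and the bound on `‖u‖`.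
-/

open Filter Topology Set Metric

theorem mul_norm_le_norm_of_mul_sq_le_apply {E : Type*} [SeminormedAddCommGroup E]
    [NormedSpace ℝ E] {φ : StrongDual ℝ E} {x : E} {m : ℝ} (h : m * ‖x‖ ^ 2 ≤ φ x) :
    m * ‖x‖ ≤ ‖φ‖ := by
  rcases (norm_nonneg x).eq_or_lt with hx | hx
  · simp [← hx]
  · refine le_of_mul_le_mul_right ?_ hx
    calc m * ‖x‖ * ‖x‖ = m * ‖x‖ ^ 2 := by ring
      _ ≤ φ x := h
      _ ≤ ‖φ x‖ := Real.le_norm_self _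
      _ ≤ ‖φ‖ * ‖x‖ := φ.le_opNorm x

theorem norm_sub_smul_sq_le {E : Type*} [NormedAddCommGroup E] [InnerProductSpace ℝ E]
    {x y : E} {c m M : ℝ} (hc : 0 ≤ c) (hxy : m * ‖x‖ ^ 2 ≤ inner ℝ x y)
    (hy : ‖y‖ ≤ M * ‖x‖) :
    ‖x - c • y‖ ^ 2 ≤ (1 - 2 * c * m + c ^ 2 * M ^ 2) * ‖x‖ ^ 2 := by
  have hy2 : ‖y‖ ^ 2 ≤ (M * ‖x‖) ^ 2 := pow_le_pow_left₀ (norm_nonneg y) hy 2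
  rw [norm_sub_sq_real, real_inner_smul_right, norm_smul, Real.norm_of_nonneg hc]
  nlinarith [mul_le_mul_of_nonneg_left hxy hc, mul_le_mul_of_nonneg_left hy2 (sq_nonneg c)]

theorem exists_fixedPoint_of_lipschitzOnWith {α : Type*} [MetricSpace α] {T : α → α}
    {s : Set α} (hs : IsComplete s) (hsT : MapsTo T s s) {K : NNReal} (hK : K < 1)
    (hT : LipschitzOnWith K T s) {x : α} (hx : x ∈ s) :
    ∃ y ∈ s, Function.IsFixedPt T y ∧ Tendsto (fun n ↦ T^[n] x) atTop (𝓝 y) :=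
  let ⟨y, hys, hfix, hlim, _⟩ :=
    ContractingWith.exists_fixedPoint' hs hsT ⟨hK, hT.mapsToRestrict hsT⟩ hx (edist_ne_top _ _)
  ⟨y, hys, hfix, hlim⟩

section ResidualStep

variable {𝓗 : Type*} [NormedAddCommGroup 𝓗] [InnerProductSpace ℝ 𝓗] [CompleteSpace 𝓗]
  {A : 𝓗 → StrongDual ℝ 𝓗} {f : StrongDual ℝ 𝓗} {m M R : ℝ}

/-- The map `Q u = u - c J⁻¹(Au - f)`, with `J` the Riesz isometry `InnerProductSpace.toDual`. -/
noncomputable def residualStep (A : 𝓗 → StrongDual ℝ 𝓗) (f : StrongDual ℝ 𝓗) (c : ℝ) (w : 𝓗) : 𝓗 :=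
  w - c • (InnerProductSpace.toDual ℝ 𝓗).symm (A w - f)

theorem residualStep_eq_self_iff {c : ℝ} (hc : c ≠ 0) {u : 𝓗} :
    residualStep A f c u = u ↔ A u = f := by
  simp [residualStep, hc, sub_eq_zero]

theorem norm_residualStep_zero {c : ℝ} (hc : 0 ≤ c) :
    ‖residualStep A f c 0‖ = c * ‖A 0 - f‖ := by
  simp only [residualStep, zero_sub, norm_neg, norm_smul, LinearIsometryEquiv.norm_map,
    Real.norm_of_nonneg hc]

theorem norm_residualStep_sub_le (hm : 0 ≤ m) (hM : M ≠ 0) {u v : 𝓗}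
    (hmono : m * ‖u - v‖ ^ 2 ≤ (A u - A v) (u - v)) (hlip : ‖A u - A v‖ ≤ M * ‖u - v‖) :
    ‖residualStep A f (m / M ^ 2) u - residualStep A f (m / M ^ 2) v‖ ≤
      √(1 - m ^ 2 / M ^ 2) * ‖u - v‖ := by
  set J := InnerProductSpace.toDual ℝ 𝓗
  have hstep : residualStep A f (m / M ^ 2) u - residualStep A f (m / M ^ 2) v =
      (u - v) - (m / M ^ 2) • J.symm (A u - A v) := by
    simp only [residualStep, map_sub, smul_sub]
    abel
  have hsq := norm_sub_smul_sq_le (x := u - v) (y := J.symm (A u - A v)) (c := m / M ^ 2) (m := m)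
    (M := M) (by positivity)
    (by rwa [real_inner_comm, InnerProductSpace.toDual_symm_apply])
    (by rwa [LinearIsometryEquiv.norm_map])
  have hconst : 1 - 2 * (m / M ^ 2) * m + (m / M ^ 2) ^ 2 * M ^ 2 = 1 - m ^ 2 / M ^ 2 := by
    field_simp
    ring
  rw [hconst] at hsq
  rw [hstep, ← Real.sqrt_sq (norm_nonneg (u - v)), ← Real.sqrt_mul' _ (sq_nonneg _)]
  exact (le_abs_self _).trans (Real.abs_le_sqrt hsq)

variable (hm : 0 < m) (hmM : m ≤ M)
  (hmono : ∀ u v : 𝓗, m * ‖u - v‖ ^ 2 ≤ (A u - A v) (u - v))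
  (hlip : ∀ u v : 𝓗, ‖u‖ ≤ R → ‖v‖ ≤ R → ‖A u - A v‖ ≤ M * ‖u - v‖)
include hm hmM hmono hlip

theorem lipschitzOnWith_residualStep :
    LipschitzOnWith (√(1 - m ^ 2 / M ^ 2)).toNNReal (residualStep A f (m / M ^ 2))
      (closedBall 0 R) :=
  LipschitzOnWith.of_dist_le' fun u hu v hv ↦ by
    rw [mem_closedBall_zero_iff] at hu hv
    simpa only [dist_eq_norm] using norm_residualStep_sub_le (f := f) hm.le
      (hm.trans_le hmM).ne' (hmono u v) (hlip u v hu hv)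

theorem mapsTo_residualStep_closedBall (hRf : 2 / m * ‖A 0 - f‖ ≤ R) :
    MapsTo (residualStep A f (m / M ^ 2)) (closedBall 0 R) (closedBall 0 R) := by
  intro u hu
  rw [mem_closedBall_zero_iff] at hu ⊢
  have hM : 0 < M := hm.trans_le hmM
  set t := m ^ 2 / M ^ 2 with ht_def
  have ht : t ≤ 1 := (div_le_one (by positivity)).2 (pow_le_pow_left₀ hm.le hmM 2)
  have hk : √(1 - t) ≤ 1 - t / 2 :=
    (Real.sqrt_le_left (by linarith)).2 (by nlinarith [sq_nonneg t])
  have hR : 0 ≤ R := (by positivity : 0 ≤ 2 / m * ‖A 0 - f‖).trans hRf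
  have hA0 : m / M ^ 2 * ‖A 0 - f‖ ≤ t * R / 2 := by
    rw [div_mul_eq_mul_div, div_le_iff₀ hm] at hRf
    calc m / M ^ 2 * ‖A 0 - f‖ ≤ m / M ^ 2 * (m * R / 2) := by gcongr; linarith
      _ = t * R / 2 := by rw [ht_def]; ring
  have hlip0 :=
    norm_residualStep_sub_le (f := f) hm.le hM.ne' (hmono u 0) (hlip u 0 hu (by simpa))
  rw [sub_zero] at hlip0
  calc ‖residualStep A f (m / M ^ 2) u‖
      ≤ ‖residualStep A f (m / M ^ 2) u - residualStep A f (m / M ^ 2) 0‖ +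
          ‖residualStep A f (m / M ^ 2) 0‖ := norm_le_norm_sub_add _ _
    _ ≤ √(1 - t) * R + t * R / 2 := by
        rw [norm_residualStep_zero (by positivity)]
        gcongr ?_ + ?_
        exact hlip0.trans (mul_le_mul_of_nonneg_left hu (Real.sqrt_nonneg _))
    _ ≤ (1 - t / 2) * R + t * R / 2 := by gcongr
    _ = R := by ring

end ResidualStep

theorem solution_by_contractive_iteration_general
    {𝓗 : Type*} [NormedAddCommGroup 𝓗] [InnerProductSpace ℝ 𝓗] [CompleteSpace 𝓗]
    (m : ℝ) (hm : 0 < m) (A : 𝓗 → StrongDual ℝ 𝓗)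
    (hmono : ∀ u v : 𝓗, m * ‖u - v‖ ^ 2 ≤ (A u - A v) (u - v))
    (R : ℝ) (M : ℝ) (hmM : m ≤ M)
    (hlip : ∀ u v : 𝓗, ‖u‖ ≤ R → ‖v‖ ≤ R → ‖A u - A v‖ ≤ M * ‖u - v‖)
    (f : StrongDual ℝ 𝓗)
    (hRf : 2 / m * ‖A 0 - f‖ ≤ R) :
    ∃ u : 𝓗, ‖u‖ ≤ R ∧ A u = f ∧
      (∀ v : 𝓗, ‖v‖ ≤ R → A v = f → v = u) ∧
      ‖u‖ ≤ 1 / m * ‖A 0 - f‖ ∧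
      Tendsto
        (fun n : ℕ =>
          (fun w : 𝓗 => w - (m / M ^ 2) • (InnerProductSpace.toDual ℝ 𝓗).symm (A w - f))^[n] 0)
        atTop (𝓝 u) := by
  have hM : 0 < M := hm.trans_le hmM
  have hR : 0 ≤ R := (by positivity : 0 ≤ 2 / m * ‖A 0 - f‖).trans hRf
  have hK : (√(1 - m ^ 2 / M ^ 2)).toNNReal < 1 := by
    rw [Real.toNNReal_lt_one, Real.sqrt_lt' one_pos]
    have : 0 < m ^ 2 / M ^ 2 := by positivity
    linarith
  obtain ⟨u, hu, hfix, hlim⟩ := exists_fixedPoint_of_lipschitzOnWith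
    isClosed_closedBall.isComplete (mapsTo_residualStep_closedBall hm hmM hmono hlip hRf) hK
    (lipschitzOnWith_residualStep hm hmM hmono hlip) (mem_closedBall_self hR)
  have hAu : A u = f := (residualStep_eq_self_iff (by positivity)).mp hfix
  rw [mem_closedBall_zero_iff] at hu
  refine ⟨u, hu, hAu, fun v _ hAv ↦ ?_, ?_, hlim⟩
  · have := mul_norm_le_norm_of_mul_sq_le_apply (hmono v u)
    rw [hAv, hAu, sub_self, norm_zero] at this
    exact sub_eq_zero.mp (norm_le_zero_iff.mp (nonpos_of_mul_nonpos_right this hm))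
  · have := mul_norm_le_norm_of_mul_sq_le_apply (hmono u 0)
    rw [sub_zero, hAu, norm_sub_rev] at this
    rw [one_div, ← div_eq_inv_mul, le_div_iff₀' hm]
    exact this

/-- **Solution of `Au = f` via the Banach contraction theorem.**
Let `𝓗` be a real Hilbert space, `A : 𝓗 → 𝓗*` strongly monotone with constant `m > 0`,
Lipschitz with constant `M` on the closed ball `𝓑` of radius `R`, let `J` be the duality map,
`f ∈ 𝓗*`, `Q u = u - (m/M²) J⁻¹(Au - f)`, and assume `R ≥ (2/m)·‖A0 - f‖`.  Then there is a
unique `u ∈ 𝓑` with `Au = f`; it satisfies `‖u‖ ≤ (1/m)·‖A0 - f‖` and is the limit of the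
iterates `u₁ = 0`, `u_{n+1} = Q u_n`. -/
theorem solution_by_contractive_iteration
    {𝓗 : Type*} [NormedAddCommGroup 𝓗] [InnerProductSpace ℝ 𝓗] [CompleteSpace 𝓗]
    (m : ℝ) (hm : 0 < m) (A : 𝓗 → StrongDual ℝ 𝓗)
    (hmono : ∀ u v : 𝓗, m * ‖u - v‖ ^ 2 ≤ (A u - A v) (u - v))
    (R : ℝ) (hR : 0 < R) (M : ℝ) (hmM : m ≤ M)
    (hlip : ∀ u v : 𝓗, ‖u‖ ≤ R → ‖v‖ ≤ R → ‖A u - A v‖ ≤ M * ‖u - v‖)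
    (f : StrongDual ℝ 𝓗)
    (hRf : 2 / m * ‖A 0 - f‖ ≤ R) :
    ∃ u : 𝓗, ‖u‖ ≤ R ∧ A u = f ∧
      (∀ v : 𝓗, ‖v‖ ≤ R → A v = f → v = u) ∧
      ‖u‖ ≤ 1 / m * ‖A 0 - f‖ ∧
      Tendsto
        (fun n : ℕ =>
          (fun w : 𝓗 => w - (m / M ^ 2) • (InnerProductSpace.toDual ℝ 𝓗).symm (A w - f))^[n] 0)
        atTop (𝓝 u) :=
  solution_by_contractive_iteration_general m hm A hmono R M hmM hlip f hRf
end

section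
/- Let H be a separable Hilbert space and let A and B be self-adjoint operators in H with D(A) = D(B), each having pure point spectrum: there are orthonormal bases (ψ_n)_{n∈ℕ} and (φ_n)_{n∈ℕ} of H and real numbers (λ_n), (μ_n) with Aψ_n = λ_n ψ_n and Bφ_n = μ_n φ_n for all n. Let C be a bounded self-adjoint operator on H with Au = Bu + Cu for all u ∈ D(A). Let f : ℝ → (0, ∞) be a decreasing function such that f(A) and f(B) are trace class. Then tr(C·f(A)) − tr(C·f(B)) ≤ 0; equivalently, ∑_{n,m=1}^∞ (f(λ_n) − f(μ_m))·(λ_n − μ_m)·|(ψ_n, φ_m)|² ≤ 0. -/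
/-!
Write `w n m = (λ n - μ m) * ‖⟪ψ n, φ m⟫‖ ^ 2`. Expanding `⟪ψ n, C ψ n⟫` in the basis `φ` by
Parseval and using `⟪C ψ n, φ m⟫ = (λ n - μ m) ⟪ψ n, φ m⟫` gives `Re ⟪ψ n, C ψ n⟫ = ∑ m, w n m`;
since `C` is self-adjoint, expanding `⟪φ m, C φ m⟫` in the basis `ψ` gives `∑ n, w n m`.
The family `w` has absolutely summable rows and columns with uniformly bounded sums, because
`|w n m| = ‖⟪ψ n, φ m⟫‖ * ‖⟪C ψ n, φ m⟫‖` and Bessel's inequality applies to both factors; so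
both traces are sums of one summable double series, and their difference is
`∑ n m, (f (λ n) - f (μ m)) * w n m`, whose terms are `≤ 0` because `f` is antitone.
-/

open scoped InnerProductSpace ComplexInnerProductSpace

theorem hasSum_prod_mul_of_tsum_abs_le {ι κ : Type*} {a : ι → ℝ} (ha : Summable a)
    {w : ι → κ → ℝ} {r : ι → ℝ} {K : ℝ} (hw : ∀ i, HasSum (w i) (r i))
    (hw_abs : ∀ i, Summable fun j => |w i j|) (hK : ∀ i, ∑' j, |w i j| ≤ K) :
    HasSum (fun p : ι × κ => a p.1 * w p.1 p.2) (∑' i, a i * r i) := by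
  have hsum : Summable fun p : ι × κ => a p.1 * w p.1 p.2 := by
    refine summable_abs_iff.mp <|
      (summable_prod_of_nonneg fun _ => abs_nonneg _).mpr ⟨fun i => ?_, ?_⟩
    · simpa only [abs_mul] using (hw_abs i).mul_left |a i|
    · refine .of_nonneg_of_le (fun i => tsum_nonneg fun j => abs_nonneg _) (fun i => ?_)
        (ha.abs.mul_right K)
      simp only [abs_mul, tsum_mul_left]
      exact mul_le_mul_of_nonneg_left (hK i) (abs_nonneg _)
  rw [(hsum.hasSum.prod_fiberwise fun i => (hw i).mul_left (a i)).tsum_eq]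
  exact hsum.hasSum

section Orthonormal

variable {𝕜 E ι : Type*} [RCLike 𝕜] [SeminormedAddCommGroup E] [InnerProductSpace 𝕜 E]
  {v : ι → E}

theorem Orthonormal.summable_norm_inner_mul_norm_inner (hv : Orthonormal 𝕜 v) (x y : E) :
    Summable fun i => ‖⟪v i, x⟫_𝕜‖ * ‖⟪v i, y⟫_𝕜‖ :=
  .of_nonneg_of_le (fun _ => by positivity)
    (fun i => by linarith [two_mul_le_add_sq ‖⟪v i, x⟫_𝕜‖ ‖⟪v i, y⟫_𝕜‖])
    (((hv.inner_products_summable x).add (hv.inner_products_summable y)).div_const 2)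

theorem Orthonormal.tsum_norm_inner_mul_norm_inner_le (hv : Orthonormal 𝕜 v) (x y : E) :
    ∑' i, ‖⟪v i, x⟫_𝕜‖ * ‖⟪v i, y⟫_𝕜‖ ≤ (‖x‖ ^ 2 + ‖y‖ ^ 2) / 2 := by
  have hx := hv.inner_products_summable x
  have hy := hv.inner_products_summable y
  calc ∑' i, ‖⟪v i, x⟫_𝕜‖ * ‖⟪v i, y⟫_𝕜‖
      ≤ ∑' i, (‖⟪v i, x⟫_𝕜‖ ^ 2 + ‖⟪v i, y⟫_𝕜‖ ^ 2) / 2 :=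
        (hv.summable_norm_inner_mul_norm_inner x y).tsum_le_tsum
          (fun i => by linarith [two_mul_le_add_sq ‖⟪v i, x⟫_𝕜‖ ‖⟪v i, y⟫_𝕜‖])
          ((hx.add hy).div_const 2)
    _ = ((∑' i, ‖⟪v i, x⟫_𝕜‖ ^ 2) + ∑' i, ‖⟪v i, y⟫_𝕜‖ ^ 2) / 2 := by
        rw [tsum_div_const, hx.tsum_add hy]
    _ ≤ (‖x‖ ^ 2 + ‖y‖ ^ 2) / 2 := by
        gcongr <;> exact hv.tsum_inner_products_le _

variable {x y : E} {c : ι → ℝ}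

theorem abs_mul_norm_inner_sq_eq (h : ∀ i, ⟪y, v i⟫_𝕜 = c i * ⟪x, v i⟫_𝕜) (i : ι) :
    |c i * ‖⟪x, v i⟫_𝕜‖ ^ 2| = ‖⟪v i, x⟫_𝕜‖ * ‖⟪v i, y⟫_𝕜‖ := by
  rw [norm_inner_symm (v i) y, h, norm_mul, RCLike.norm_ofReal, abs_mul, abs_sq,
    norm_inner_symm]
  ring

theorem Orthonormal.summable_abs_mul_norm_inner_sq (hv : Orthonormal 𝕜 v)
    (h : ∀ i, ⟪y, v i⟫_𝕜 = c i * ⟪x, v i⟫_𝕜) : Summable fun i => |c i * ‖⟪x, v i⟫_𝕜‖ ^ 2| := by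
  simpa only [abs_mul_norm_inner_sq_eq h] using hv.summable_norm_inner_mul_norm_inner x y

theorem Orthonormal.tsum_abs_mul_norm_inner_sq_le (hv : Orthonormal 𝕜 v)
    (h : ∀ i, ⟪y, v i⟫_𝕜 = c i * ⟪x, v i⟫_𝕜) :
    ∑' i, |c i * ‖⟪x, v i⟫_𝕜‖ ^ 2| ≤ (‖x‖ ^ 2 + ‖y‖ ^ 2) / 2 := by
  simpa only [abs_mul_norm_inner_sq_eq h] using hv.tsum_norm_inner_mul_norm_inner_le x y

end Orthonormal

section HilbertBasis

variable {𝕜 E ι : Type*} [RCLike 𝕜] [NormedAddCommGroup E] [InnerProductSpace 𝕜 E]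

theorem HilbertBasis.hasSum_re_inner_of_inner_eq_mul (b : HilbertBasis ι 𝕜 E) {x y : E}
    {c : ι → ℝ} (h : ∀ i, ⟪y, b i⟫_𝕜 = c i * ⟪x, b i⟫_𝕜) :
    HasSum (fun i => c i * ‖⟪x, b i⟫_𝕜‖ ^ 2) (RCLike.re ⟪x, y⟫_𝕜) := by
  have hterm : ∀ i, ⟪x, b i⟫_𝕜 * ⟪b i, y⟫_𝕜 = ((c i * ‖⟪x, b i⟫_𝕜‖ ^ 2 : ℝ) : 𝕜) := fun i => by
    rw [← inner_conj_symm (b i) y, h, map_mul, RCLike.conj_ofReal, mul_left_comm,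
      RCLike.mul_conj]
    push_cast
    ring
  simpa only [hterm, RCLike.reCLM_apply, RCLike.ofReal_re] using
    (b.hasSum_inner_mul_inner x y).mapL RCLike.reCLM

theorem IsSelfAdjoint.inner_apply_swap_of_eq_ofReal_mul [CompleteSpace E] {T : E →L[𝕜] E}
    (hT : IsSelfAdjoint T) {u v : E} {c : ℝ} (h : ⟪T u, v⟫_𝕜 = c * ⟪u, v⟫_𝕜) :
    ⟪T v, u⟫_𝕜 = c * ⟪v, u⟫_𝕜 := by
  calc ⟪T v, u⟫_𝕜 = ⟪v, T u⟫_𝕜 := hT.isSymmetric v u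
    _ = c * ⟪v, u⟫_𝕜 := by
      rw [← inner_conj_symm, h, map_mul, RCLike.conj_ofReal, inner_conj_symm]

theorem HilbertBasis.hasSum_prod_mul_norm_inner_sq {κ : Type*} (b : HilbertBasis κ 𝕜 E) {a : ι → ℝ}
    (ha : Summable a) {x : ι → E} (hx : ∀ i, ‖x i‖ ≤ 1) (T : E →L[𝕜] E) {c : ι → κ → ℝ}
    (h : ∀ i j, ⟪T (x i), b j⟫_𝕜 = c i j * ⟪x i, b j⟫_𝕜) :
    HasSum (fun p : ι × κ => a p.1 * (c p.1 p.2 * ‖⟪x p.1, b p.2⟫_𝕜‖ ^ 2))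
      (∑' i, a i * RCLike.re ⟪x i, T (x i)⟫_𝕜) := by
  refine hasSum_prod_mul_of_tsum_abs_le ha (fun i => b.hasSum_re_inner_of_inner_eq_mul (h i))
    (fun i => b.orthonormal.summable_abs_mul_norm_inner_sq (h i))
    (K := (1 + ‖T‖ ^ 2) / 2) fun i =>
      (b.orthonormal.tsum_abs_mul_norm_inner_sq_le (h i)).trans ?_
  gcongr
  · exact pow_le_one₀ (norm_nonneg _) (hx i)
  · exact T.unit_le_opNorm _ (hx i)

end HilbertBasis

theorem trace_monotone_of_antitone_general
    {H : Type*} [NormedAddCommGroup H] [InnerProductSpace ℂ H] [CompleteSpace H]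
    (ψ φ : HilbertBasis ℕ ℂ H) (lam mu : ℕ → ℝ)
    (C : H →L[ℂ] H) (hC : IsSelfAdjoint C)
    -- `A u = B u + C u` on `D(A) = D(B)`, in matrix elements w.r.t. the eigenbases
    (hABC : ∀ n m : ℕ,
      ⟪C (ψ n), (φ m : H)⟫ = ((lam n : ℂ) - (mu m : ℂ)) * ⟪(ψ n : H), (φ m : H)⟫)
    (f : ℝ → ℝ) (hfanti : Antitone f)
    -- `f(A)` and `f(B)` are trace class
    (hfA : Summable fun n => f (lam n)) (hfB : Summable fun m => f (mu m)) :
    -- `tr (C f(A)) - tr (C f(B)) ≤ 0` ...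
    ((∑' n, f (lam n) * (⟪(ψ n : H), C (ψ n)⟫).re) -
        ∑' m, f (mu m) * (⟪(φ m : H), C (φ m)⟫).re ≤ 0) ∧
    -- ... equivalently, the double sum is nonpositive
    (∑' n, ∑' m, (f (lam n) - f (mu m)) * (lam n - mu m) * ‖⟪(ψ n : H), (φ m : H)⟫‖ ^ 2) ≤ 0 := by
  have hrow : ∀ n m,
      ⟪C (ψ n), (φ m : H)⟫ = ((lam n - mu m : ℝ) : ℂ) * ⟪(ψ n : H), (φ m : H)⟫ := by
    push_cast
    exact hABC
  have hA : HasSum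
      (fun p : ℕ × ℕ => f (lam p.1) * ((lam p.1 - mu p.2) * ‖⟪(ψ p.1 : H), (φ p.2 : H)⟫‖ ^ 2))
      (∑' n, f (lam n) * (⟪(ψ n : H), C (ψ n)⟫).re) :=
    φ.hasSum_prod_mul_norm_inner_sq hfA (fun n => (ψ.orthonormal.1 n).le) C
      (c := fun n m => lam n - mu m) hrow
  have hB : HasSum
      (fun p : ℕ × ℕ => f (mu p.2) * ((lam p.1 - mu p.2) * ‖⟪(ψ p.1 : H), (φ p.2 : H)⟫‖ ^ 2))
      (∑' m, f (mu m) * (⟪(φ m : H), C (φ m)⟫).re) := by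
    have := ψ.hasSum_prod_mul_norm_inner_sq hfB (fun m => (φ.orthonormal.1 m).le) C
      (c := fun m n => lam n - mu m) fun m n => hC.inner_apply_swap_of_eq_ofReal_mul (hrow n m)
    rw [← (Equiv.prodComm ℕ ℕ).hasSum_iff]
    simpa only [Function.comp_def, Equiv.prodComm_apply, Prod.fst_swap, Prod.snd_swap,
      RCLike.re_to_complex, norm_inner_symm (φ _ : H)] using this
  have hsign : ∀ x y, (f x - f y) * (x - y) ≤ 0 := fun x y =>
    (hfanti.antivary monotone_id).sub_mul_sub_nonpos y x
  refine ⟨(hA.sub hB).nonpos fun p => ?_, tsum_nonpos fun n => tsum_nonpos fun m =>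
    mul_nonpos_of_nonpos_of_nonneg (hsign _ _) (sq_nonneg _)⟩
  rw [← sub_mul, ← mul_assoc]
  exact mul_nonpos_of_nonpos_of_nonneg (hsign _ _) (sq_nonneg _)

/-- **Antitonicity of the particle density (trace monotonicity).**
Let `H` be a separable Hilbert space and `A, B` self-adjoint operators with `D(A) = D(B)`,
each with pure point spectrum: orthonormal bases `(ψ_n)`, `(φ_m)` of `H` and reals `(λ_n)`,
`(μ_m)` with `A ψ_n = λ_n ψ_n`, `B φ_m = μ_m φ_m`.  Let `C` be a bounded self-adjoint operator
with `A u = B u + C u` on `D(A)`; in matrix elements, `⟪C ψ_n, φ_m⟫ = (λ_n - μ_m) ⟪ψ_n, φ_m⟫`.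
Let `f : ℝ → (0, ∞)` be decreasing with `f(A)`, `f(B)` trace class, i.e. `∑ f(λ_n) < ∞` and
`∑ f(μ_m) < ∞`.  Then `tr (C f(A)) - tr (C f(B)) ≤ 0`, where
`tr (C f(A)) = ∑_n f(λ_n) ⟪ψ_n, C ψ_n⟫`; equivalently,
`∑_{n,m} (f(λ_n) - f(μ_m)) (λ_n - μ_m) |⟪ψ_n, φ_m⟫|² ≤ 0`. -/
theorem trace_monotone_of_antitone
    {H : Type*} [NormedAddCommGroup H] [InnerProductSpace ℂ H] [CompleteSpace H]
    (ψ φ : HilbertBasis ℕ ℂ H) (lam mu : ℕ → ℝ)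
    (C : H →L[ℂ] H) (hC : IsSelfAdjoint C)
    -- `A u = B u + C u` on `D(A) = D(B)`, in matrix elements w.r.t. the eigenbases
    (hABC : ∀ n m : ℕ,
      ⟪C (ψ n), (φ m : H)⟫ = ((lam n : ℂ) - (mu m : ℂ)) * ⟪(ψ n : H), (φ m : H)⟫)
    (f : ℝ → ℝ) (hfpos : ∀ x : ℝ, 0 < f x) (hfanti : Antitone f)
    -- `f(A)` and `f(B)` are trace class
    (hfA : Summable fun n => f (lam n)) (hfB : Summable fun m => f (mu m)) :
    -- `tr (C f(A)) - tr (C f(B)) ≤ 0` ...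
    ((∑' n, f (lam n) * (⟪(ψ n : H), C (ψ n)⟫).re) -
        ∑' m, f (mu m) * (⟪(φ m : H), C (φ m)⟫).re ≤ 0) ∧
    -- ... equivalently, the double sum is nonpositive
    (∑' n, ∑' m, (f (lam n) - f (mu m)) * (lam n - mu m) * ‖⟪(ψ n : H), (φ m : H)⟫‖ ^ 2) ≤ 0 :=
  trace_monotone_of_antitone_general ψ φ lam mu C hC hABC f hfanti hfA hfB
end
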